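/- For all n ≥ 5, 312^l_n = (n−1)·(312^l_{n−2} + (n−3)!!) − (n−5)!!·(n−3)(n−2)/2, where 312^l_m denotes the total number of consecutive occurrences of the pattern 312 over all permutations π ∈ Av_m(123,132,321) with π(m−1)=1. -/

import Mathlib

/-- `ConsecOcc p π i`: the word `π(i) π(i+1) … π(i+r-1)` (positions `0`-indexed)
is order-isomorphic to the pattern word `p 0, …, p (r-1)`. -/
def ConsecOcc {n r : ℕ} (p : Fin r → ℕ) (π : Equiv.Perm (Fin n)) (i : ℕ) : Prop :=
  ∃ h : i + r ≤ n, ∀ j k : Fin r,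
    (π ⟨i + j.val, by have := j.isLt; omega⟩ < π ⟨i + k.val, by have := k.isLt; omega⟩
      ↔ p j < p k)

/-- The number of consecutive occurrences of the pattern `p` in `π`. -/
noncomputable def occCount {n r : ℕ} (p : Fin r → ℕ) (π : Equiv.Perm (Fin n)) : ℕ :=
  Nat.card {i : ℕ // ConsecOcc p π i}

/-- `π` has no consecutive occurrence of any pattern in `ps`. -/
def AvoidsAll {n r : ℕ} (ps : List (Fin r → ℕ)) (π : Equiv.Perm (Fin n)) : Prop :=
  ∀ p ∈ ps, ∀ i, ¬ ConsecOcc p π i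

-- Total number of consecutive occurrences of `p` over all size-`n` permutations satisfying `P`.
open scoped Classical in
noncomputable def totOcc {n r : ℕ} (p : Fin r → ℕ) (P : Equiv.Perm (Fin n) → Prop) : ℕ :=
  ∑ π : Equiv.Perm (Fin n), if P π then occCount p π else 0

/-- The number of size-`n` permutations satisfying `P`. -/
noncomputable def classCard (n : ℕ) (P : Equiv.Perm (Fin n) → Prop) : ℕ :=
  Nat.card {π : Equiv.Perm (Fin n) // P π}

def p123 : Fin 3 → ℕ := ![1,2,3]
def p132 : Fin 3 → ℕ := ![1,3,2]
def p213 : Fin 3 → ℕ := ![2,1,3]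
def p231 : Fin 3 → ℕ := ![2,3,1]
def p312 : Fin 3 → ℕ := ![3,1,2]
def p321 : Fin 3 → ℕ := ![3,2,1]

/-- `tl312 m`: total number of consecutive occurrences of `312` over permutations of
`Av_m(123,132,321)` having `1` in the next-to-last position. -/
noncomputable def tl312 (m : ℕ) (hm : 2 ≤ m) : ℕ :=
  totOcc p312 (fun π : Equiv.Perm (Fin m) => AvoidsAll [p123, p132, p321] π
    ∧ π ⟨m - 2, by omega⟩ = ⟨0, by omega⟩)

/-!
Write `C_m` for the permutations counted by `tl312 m`. A permutation of `C_{k+2}` ends with the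
values `1, v`; deleting them and standardizing leaves a permutation `σ` of `C_k`. Indeed,
avoiding consecutive `123`, `132` and `321` means that every window is a `213`, `312` or `231`,
so the word before the final `1, v` zigzags with valleys decreasing towards position `k - 1`,
where `σ` thus has its `1`. Conversely every `σ ∈ C_k` and `v ∈ {2, …, k + 2}` give a
permutation of `C_{k+2}`. Along this bijection the `312`-occurrences of `σ` survive and one is
added, at position `k`, exactly when `v` lies below the relabelled last value of `σ`. Hence
`|C_{k+2}| = (k + 1) |C_k|`, so `|C_{k+1}| = k!!`, and the total number of `312`s satisfies
`tl312 (k + 2) = (k + 1) tl312 k + Σ_{σ ∈ C_k} σ(k)`, where the last sum, taken over `C_{k+2}`,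
is again computed through the bijection.
-/

open Equiv Finset

namespace Av

section Entries

variable {m : ℕ}

/-- The 0-based value `π(i)` read at a natural-number position; `0` out of range. -/
def entry (π : Perm (Fin m)) (i : ℕ) : ℕ :=
  if h : i < m then π ⟨i, h⟩ else 0

theorem entry_of_lt (π : Perm (Fin m)) {i : ℕ} (h : i < m) : entry π i = π ⟨i, h⟩ :=
  dif_pos h

theorem entry_lt (π : Perm (Fin m)) {i : ℕ} (h : i < m) : entry π i < m := by
  rw [entry_of_lt π h]
  exact Fin.isLt _

theorem entry_inj (π : Perm (Fin m)) {i j : ℕ} (hi : i < m) (hj : j < m) :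
    entry π i = entry π j ↔ i = j := by
  rw [entry_of_lt π hi, entry_of_lt π hj, Fin.val_inj, π.apply_eq_iff_eq, Fin.mk.injEq]

theorem entry_ne (π : Perm (Fin m)) {i j : ℕ} (hi : i < m) (hj : j < m) (hij : i ≠ j) :
    entry π i ≠ entry π j :=
  fun h => hij ((entry_inj π hi hj).mp h)

theorem ext_entry {π τ : Perm (Fin m)} (h : ∀ i < m, entry π i = entry τ i) : π = τ := by
  ext x
  simpa only [entry_of_lt _ x.isLt] using h x x.isLt

theorem entry_eq_zero_of_forall_le (π : Perm (Fin m)) {j : ℕ}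
    (h : ∀ i < m, entry π j ≤ entry π i) : entry π j = 0 := by
  by_cases hj : j < m
  · have := h _ (π.symm ⟨0, by omega⟩).isLt
    rw [entry_of_lt π (π.symm _).isLt] at this
    simp only [Fin.eta, apply_symm_apply] at this
    omega
  · exact dif_neg hj

noncomputable def ofWord (w : ℕ → ℕ) (hmaps : Set.MapsTo w (Set.Iio m) (Set.Iio m))
    (hinj : Set.InjOn w (Set.Iio m)) : Perm (Fin m) :=
  Equiv.ofBijective (fun i => ⟨w i, hmaps i.isLt⟩) <| Finite.injective_iff_bijective.mp
    fun i j hij => Fin.ext (hinj i.isLt j.isLt (Fin.mk.inj_iff.mp hij))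

theorem entry_ofWord {w : ℕ → ℕ} (hmaps : Set.MapsTo w (Set.Iio m) (Set.Iio m))
    (hinj : Set.InjOn w (Set.Iio m)) {i : ℕ} (h : i < m) :
    entry (ofWord w hmaps hinj) i = w i :=
  entry_of_lt _ h

end Entries

section Patterns

variable {m : ℕ}

theorem consecOcc_iff_entry {r : ℕ} (p : Fin r → ℕ) (π : Perm (Fin m)) (i : ℕ) :
    ConsecOcc p π i ↔ i + r ≤ m ∧
      ∀ a b : Fin r, (entry π (i + a) < entry π (i + b) ↔ p a < p b) := by
  refine ⟨fun ⟨h, H⟩ => ⟨h, fun a b => ?_⟩, fun ⟨h, H⟩ => ⟨h, fun a b => ?_⟩⟩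
  · rw [entry_of_lt π (by omega), entry_of_lt π (by omega)]
    exact H a b
  · have := H a b
    rwa [entry_of_lt π (by omega), entry_of_lt π (by omega)] at this

theorem consecOcc_p123_iff (π : Perm (Fin m)) (i : ℕ) : ConsecOcc p123 π i ↔
    i + 3 ≤ m ∧ entry π i < entry π (i + 1) ∧ entry π (i + 1) < entry π (i + 2) := by
  rw [consecOcc_iff_entry]
  refine and_congr_right fun _ => ⟨fun H => ⟨(H 0 1).2 (by decide), (H 1 2).2 (by decide)⟩,
    fun ⟨h01, h12⟩ a b => ?_⟩
  fin_cases a <;> fin_cases b <;> simp [p123] <;> omega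

theorem consecOcc_p132_iff (π : Perm (Fin m)) (i : ℕ) : ConsecOcc p132 π i ↔
    i + 3 ≤ m ∧ entry π i < entry π (i + 2) ∧ entry π (i + 2) < entry π (i + 1) := by
  rw [consecOcc_iff_entry]
  refine and_congr_right fun _ => ⟨fun H => ⟨(H 0 2).2 (by decide), (H 2 1).2 (by decide)⟩,
    fun ⟨h02, h21⟩ a b => ?_⟩
  fin_cases a <;> fin_cases b <;> simp [p132] <;> omega

theorem consecOcc_p321_iff (π : Perm (Fin m)) (i : ℕ) : ConsecOcc p321 π i ↔
    i + 3 ≤ m ∧ entry π (i + 2) < entry π (i + 1) ∧ entry π (i + 1) < entry π i := by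
  rw [consecOcc_iff_entry]
  refine and_congr_right fun _ => ⟨fun H => ⟨(H 2 1).2 (by decide), (H 1 0).2 (by decide)⟩,
    fun ⟨h21, h10⟩ a b => ?_⟩
  fin_cases a <;> fin_cases b <;> simp [p321] <;> omega

theorem consecOcc_p312_iff (π : Perm (Fin m)) (i : ℕ) : ConsecOcc p312 π i ↔
    i + 3 ≤ m ∧ entry π (i + 1) < entry π (i + 2) ∧ entry π (i + 2) < entry π i := by
  rw [consecOcc_iff_entry]
  refine and_congr_right fun _ => ⟨fun H => ⟨(H 1 2).2 (by decide), (H 2 0).2 (by decide)⟩,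
    fun ⟨h12, h20⟩ a b => ?_⟩
  fin_cases a <;> fin_cases b <;> simp [p312] <;> omega

/-- The three-letter windows `abc` left by `123`, `132` and `321`: `213`, `312` and `231`. -/
def Allowed (a b c : ℕ) : Prop :=
  b < a ∧ b < c ∨ c < a ∧ a < b

theorem allowed_comp_iff {f : ℕ → ℕ} (hf : StrictMono f) {a b c : ℕ} :
    Allowed (f a) (f b) (f c) ↔ Allowed a b c := by
  simp only [Allowed, hf.lt_iff_lt]

theorem avoidsAll_iff_allowed (π : Perm (Fin m)) :
    AvoidsAll [p123, p132, p321] π ↔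
      ∀ i, i + 3 ≤ m → Allowed (entry π i) (entry π (i + 1)) (entry π (i + 2)) := by
  simp only [AvoidsAll, List.forall_mem_cons, List.not_mem_nil, IsEmpty.forall_iff,
    implies_true, and_true, consecOcc_p123_iff, consecOcc_p132_iff, consecOcc_p321_iff]
  refine ⟨fun ⟨h123, h132, h321⟩ i hi => ?_, fun H => ⟨?_, ?_, ?_⟩⟩
  · have := h123 i; have := h132 i; have := h321 i
    have := entry_ne π (i := i) (j := i + 1) (by omega) (by omega) (by omega)
    have := entry_ne π (i := i + 1) (j := i + 2) (by omega) (by omega) (by omega)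
    have := entry_ne π (i := i) (j := i + 2) (by omega) (by omega) (by omega)
    unfold Allowed; omega
  all_goals intro i ⟨hi, _⟩; have := H i hi; unfold Allowed at this; omega

open scoped Classical in
theorem occCount_eq_card_filter {r N : ℕ} (p : Fin r → ℕ) (π : Perm (Fin m)) (hN : m < N) :
    occCount p π = #{i ∈ range N | ConsecOcc p π i} := by
  rw [occCount, ← Nat.card_eq_finsetCard]
  refine Nat.card_congr (Equiv.subtypeEquivRight fun i => ?_)
  simp only [mem_filter, mem_range, iff_and_self]
  exact fun ⟨h, _⟩ => by omega

end Patterns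

theorem le_of_forall_allowed {x : ℕ → ℕ} {k : ℕ}
    (hx : ∀ i < k, Allowed (x i) (x (i + 1)) (x (i + 2))) (hk : x k < x (k + 1))
    {i : ℕ} (hi : i < k) : x (k - 2) ≤ x i := by
  rcases Nat.lt_or_ge k 2 with hk2 | hk2
  · rw [show i = k - 2 by omega]
  have hpeak : x (k - 2) < x (k - 1) := by
    have h₁ := hx (k - 2) (by omega)
    have h₂ := hx (k - 1) (by omega)
    rw [show k - 2 + 1 = k - 1 by omega, show k - 2 + 2 = k by omega] at h₁
    rw [show k - 1 + 1 = k by omega, show k - 1 + 2 = k + 1 by omega] at h₂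
    unfold Allowed at h₁ h₂
    omega
  -- each window `x j, x (j+1), x (j+2)` has `x j` above one of the two entries after it
  have key : ∀ j ≤ k - 2, x (k - 2) ≤ x j ∧ x (k - 2) ≤ x (j + 1) := by
    intro j hj
    induction hj using Nat.decreasingInduction with
    | self => exact ⟨le_rfl, by rw [show k - 2 + 1 = k - 1 by omega]; exact hpeak.le⟩
    | of_succ j hj ih =>
      have h := hx j (by omega)
      rw [show j + 1 + 1 = j + 2 from rfl] at ih
      unfold Allowed at h
      exact ⟨by omega, ih.1⟩
  rcases Nat.lt_or_ge i (k - 1) with h | h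
  · exact (key i (by omega)).1
  · rw [show i = k - 1 by omega]
    exact hpeak.le

/-- The class counted by `tl312 m`; `entry π (m - 2) = 0` says that `π(m - 1) = 1`. -/
def Admissible {m : ℕ} (π : Perm (Fin m)) : Prop :=
  AvoidsAll [p123, p132, p321] π ∧ entry π (m - 2) = 0

open scoped Classical in
theorem tl312_eq_sum (m : ℕ) (hm : 2 ≤ m) :
    tl312 m hm = ∑ π : {π : Perm (Fin m) // Admissible π}, occCount p312 π.1 := by
  have hadm : ∀ π : Perm (Fin m), (AvoidsAll [p123, p132, p321] π ∧
      π ⟨m - 2, by omega⟩ = ⟨0, by omega⟩) ↔ Admissible π := fun π => by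
    rw [Admissible, entry_of_lt π (by omega), Fin.ext_iff]
  simp only [tl312, totOcc, hadm, ← sum_filter]
  exact sum_subtype _ (fun π => mem_filter_univ π) _

/-- The increasing enumeration of `ℕ \ {0, a + 1}`. -/
def lift (a x : ℕ) : ℕ :=
  if x < a then x + 1 else x + 2

def lower (a y : ℕ) : ℕ :=
  if y ≤ a then y - 1 else y - 2

theorem lift_strictMono (a : ℕ) : StrictMono (lift a) := by
  intro x y h
  unfold lift
  split_ifs <;> omega

theorem lift_pos (a x : ℕ) : 0 < lift a x := by
  unfold lift
  split_ifs <;> omega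

theorem lift_ne_succ (a x : ℕ) : lift a x ≠ a + 1 := by
  unfold lift
  split_ifs <;> omega

theorem succ_lt_lift_iff {a x : ℕ} : a + 1 < lift a x ↔ a ≤ x := by
  unfold lift
  split_ifs <;> omega

theorem lower_lift (a x : ℕ) : lower a (lift a x) = x := by
  unfold lift lower
  split_ifs <;> omega

theorem lift_lower {a y : ℕ} (h₀ : y ≠ 0) (ha : y ≠ a + 1) : lift a (lower a y) = y := by
  unfold lift lower
  split_ifs <;> omega

section Extend

variable {k : ℕ}

def extendWord (a : ℕ) (σ : Perm (Fin k)) (i : ℕ) : ℕ :=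
  if i < k then lift a (entry σ i) else if i = k then 0 else a + 1

theorem extendWord_mapsTo (a : Fin (k + 1)) (σ : Perm (Fin k)) :
    Set.MapsTo (extendWord a σ) (Set.Iio (k + 2)) (Set.Iio (k + 2)) := by
  intro i hi
  simp only [Set.mem_Iio, extendWord, lift] at hi ⊢
  have := a.isLt
  split_ifs with h <;> first | omega | have := entry_lt σ h; omega

theorem extendWord_injOn (a : ℕ) (σ : Perm (Fin k)) :
    Set.InjOn (extendWord a σ) (Set.Iio (k + 2)) := by
  intro i hi j hj h
  simp only [Set.mem_Iio, extendWord] at hi hj h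
  split_ifs at h with hik hjk
  · exact (entry_inj σ hik hjk).mp ((lift_strictMono a).injective h)
  all_goals first
    | omega
    | exact absurd h (lift_pos a _).ne'
    | exact absurd h.symm (lift_pos a _).ne'
    | exact absurd h (lift_ne_succ a _)
    | exact absurd h.symm (lift_ne_succ a _)

noncomputable def extend (a : Fin (k + 1)) (σ : Perm (Fin k)) : Perm (Fin (k + 2)) :=
  ofWord (extendWord a σ) (extendWord_mapsTo a σ) (extendWord_injOn a σ)

variable (a : Fin (k + 1)) (σ : Perm (Fin k))

theorem entry_extend_of_lt {i : ℕ} (hi : i < k) :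
    entry (extend a σ) i = lift a (entry σ i) := by
  rw [extend, entry_ofWord _ _ (by omega), extendWord, if_pos hi]

theorem entry_extend_self : entry (extend a σ) k = 0 := by
  rw [extend, entry_ofWord _ _ (by omega), extendWord, if_neg (by omega), if_pos rfl]

theorem entry_extend_succ : entry (extend a σ) (k + 1) = a + 1 := by
  rw [extend, entry_ofWord _ _ (by omega), extendWord, if_neg (by omega), if_neg (by omega)]

/-- The appended `0` forces an ascent at `k`, which puts the minimum of `σ` at `k - 2`. -/
theorem admissible_extend_iff : Admissible (extend a σ) ↔ Admissible σ := by
  simp only [Admissible, avoidsAll_iff_allowed, Nat.add_sub_cancel, entry_extend_self, and_true]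
  have hinner : ∀ i, i + 3 ≤ k →
      (Allowed (entry (extend a σ) i) (entry (extend a σ) (i + 1)) (entry (extend a σ) (i + 2))
        ↔ Allowed (entry σ i) (entry σ (i + 1)) (entry σ (i + 2))) := fun i hi => by
    rw [entry_extend_of_lt a σ (by omega), entry_extend_of_lt a σ (by omega),
      entry_extend_of_lt a σ (by omega)]
    exact allowed_comp_iff (lift_strictMono a)
  constructor
  · intro H
    refine ⟨fun i hi => (hinner i hi).1 (H i (by omega)), ?_⟩
    refine entry_eq_zero_of_forall_le σ fun i hi => ?_
    have hmin := le_of_forall_allowed (fun j hj => H j (by omega))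
      (by rw [entry_extend_self, entry_extend_succ]; omega) hi
    rwa [entry_extend_of_lt a σ hi, entry_extend_of_lt a σ (by omega),
      (lift_strictMono a).le_iff_le] at hmin
  · rintro ⟨H, h₀⟩ i hi
    rcases (by omega : i + 3 ≤ k ∨ k = i + 2 ∨ k = i + 1) with h | h | h
    · exact (hinner i h).2 (H i h)
    · rw [entry_extend_of_lt a σ (by omega), entry_extend_of_lt a σ (by omega),
        show i + 2 = k by omega, entry_extend_self]
      have hne := entry_ne σ (i := i + 1) (j := i) (by omega) (by omega) (by omega)
      rw [show k - 2 = i by omega] at h₀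
      exact Or.inr ⟨lift_pos a _, (lift_strictMono a) (by omega)⟩
    · rw [entry_extend_of_lt a σ (by omega), show i + 1 = k by omega, entry_extend_self,
        show i + 2 = k + 1 by omega, entry_extend_succ]
      exact Or.inl ⟨lift_pos a _, by omega⟩

theorem consecOcc_p312_extend_iff (i : ℕ) :
    ConsecOcc p312 (extend a σ) i ↔
      ConsecOcc p312 σ i ∨ (i + 1 = k ∧ (a : ℕ) ≤ entry σ i) := by
  simp only [consecOcc_p312_iff]
  rcases (by omega : i + 3 ≤ k ∨ k = i + 2 ∨ k = i + 1 ∨ k + 2 < i + 3) with h | h | h | h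
  · rw [entry_extend_of_lt a σ (by omega), entry_extend_of_lt a σ (by omega),
      entry_extend_of_lt a σ (by omega), (lift_strictMono a).lt_iff_lt,
      (lift_strictMono a).lt_iff_lt]
    omega
  · rw [show i + 2 = k by omega, entry_extend_self]
    omega
  · rw [entry_extend_of_lt a σ (i := i) (by omega), show i + 1 = k by omega, entry_extend_self,
      show i + 2 = k + 1 by omega, entry_extend_succ, succ_lt_lift_iff]
    omega
  · omega

theorem occCount_extend :
    occCount p312 (extend a σ) =
      occCount p312 σ + if 1 ≤ k ∧ (a : ℕ) ≤ entry σ (k - 1) then 1 else 0 := by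
  classical
  rw [occCount_eq_card_filter p312 (extend a σ) (N := k + 3) (by omega),
    occCount_eq_card_filter p312 σ (N := k + 3) (by omega),
    filter_congr fun i _ => consecOcc_p312_extend_iff a σ i, filter_or, card_union_of_disjoint]
  · congr 1
    by_cases hc : 1 ≤ k ∧ (a : ℕ) ≤ entry σ (k - 1)
    · rw [if_pos hc, card_eq_one]
      refine ⟨k - 1, ?_⟩
      ext i
      simp only [mem_filter, mem_range, mem_singleton]
      constructor
      · rintro ⟨_, h, _⟩; omega
      · rintro rfl; exact ⟨by omega, by omega, hc.2⟩
    · rw [if_neg hc, card_eq_zero, filter_eq_empty_iff]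
      rintro i - ⟨h, ha⟩
      exact hc ⟨by omega, by rwa [show k - 1 = i by omega]⟩
  · rw [disjoint_filter]
    rintro i - hocc ⟨h, -⟩
    have := ((consecOcc_p312_iff σ i).mp hocc).1
    omega

end Extend

section Shrink

variable {k : ℕ} (π : Perm (Fin (k + 2)))

def shrinkWord (i : ℕ) : ℕ :=
  lower (entry π (k + 1) - 1) (entry π i)

variable {π}

theorem lift_shrinkWord (h₀ : entry π k = 0) {i : ℕ} (hi : i < k) :
    lift (entry π (k + 1) - 1) (shrinkWord π i) = entry π i := by
  have hk := entry_ne π (i := k) (j := k + 1) (by omega) (by omega) (by omega)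
  refine lift_lower ?_ ?_
  · rw [← h₀]; exact entry_ne π (by omega) (by omega) (by omega)
  · rw [Nat.sub_add_cancel (by omega)]; exact entry_ne π (by omega) (by omega) (by omega)

theorem shrinkWord_mapsTo (h₀ : entry π k = 0) :
    Set.MapsTo (shrinkWord π) (Set.Iio k) (Set.Iio k) := by
  intro i (hi : i < k)
  have hlift := lift_shrinkWord h₀ hi
  have hπi := entry_lt π (i := i) (by omega)
  have hπk := entry_lt π (i := k + 1) (by omega)
  show shrinkWord π i < k
  unfold lift at hlift
  split_ifs at hlift <;> omega

theorem shrinkWord_injOn (h₀ : entry π k = 0) : Set.InjOn (shrinkWord π) (Set.Iio k) := by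
  intro i (hi : i < k) j (hj : j < k) h
  have := congrArg (lift (entry π (k + 1) - 1)) h
  rwa [lift_shrinkWord h₀ hi, lift_shrinkWord h₀ hj, entry_inj π (by omega) (by omega)] at this

noncomputable def shrink (h₀ : entry π k = 0) : Perm (Fin k) :=
  ofWord (shrinkWord π) (shrinkWord_mapsTo h₀) (shrinkWord_injOn h₀)

theorem extend_shrink (h₀ : entry π k = 0) :
    extend ⟨entry π (k + 1) - 1, by have := entry_lt π (i := k + 1) (by omega); omega⟩
      (shrink h₀) = π := by
  refine ext_entry fun i hi => ?_
  rcases (by omega : i < k ∨ i = k ∨ i = k + 1) with h | rfl | rfl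
  · rw [entry_extend_of_lt _ _ h, shrink, entry_ofWord _ _ h, lift_shrinkWord h₀ h]
  · rw [entry_extend_self, h₀]
  · have := entry_ne π (i := k) (j := k + 1) (by omega) (by omega) (by omega)
    rw [entry_extend_succ, Fin.val_mk]
    omega

end Shrink

theorem shrink_extend {k : ℕ} (a : Fin (k + 1)) (σ : Perm (Fin k)) :
    shrink (entry_extend_self a σ) = σ := by
  refine ext_entry fun i hi => ?_
  rw [shrink, entry_ofWord _ _ hi, shrinkWord, entry_extend_succ, Nat.add_sub_cancel,
    entry_extend_of_lt a σ hi, lower_lift]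

theorem Admissible.entry_eq_zero {k : ℕ} {π : Perm (Fin (k + 2))} (h : Admissible π) :
    entry π k = 0 := by
  simpa only [Nat.add_sub_cancel] using h.2

noncomputable def extendEquiv (k : ℕ) :
    Fin (k + 1) × {σ : Perm (Fin k) // Admissible σ} ≃
      {π : Perm (Fin (k + 2)) // Admissible π} where
  toFun p := ⟨extend p.1 p.2.1, (admissible_extend_iff p.1 p.2.1).2 p.2.2⟩
  invFun π := (⟨entry π.1 (k + 1) - 1,
      by have := entry_lt π.1 (i := k + 1) (by omega); omega⟩,
    ⟨shrink π.2.entry_eq_zero, by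
      rw [← admissible_extend_iff, extend_shrink]
      exact π.2⟩)
  left_inv p := Prod.ext (Fin.ext (by simp only [entry_extend_succ, Nat.add_sub_cancel]))
    (Subtype.ext (shrink_extend p.1 p.2.1))
  right_inv π := Subtype.ext (extend_shrink π.2.entry_eq_zero)

open scoped Classical

noncomputable def admissibleCount (m : ℕ) : ℕ :=
  Fintype.card {π : Perm (Fin m) // Admissible π}

/-- `entry π (m - 1) + 1` is the last value `π(m)` in the paper's 1-based convention. -/
noncomputable def lastValueSum (m : ℕ) : ℕ :=
  ∑ π : {π : Perm (Fin m) // Admissible π}, (entry π.1 (m - 1) + 1)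

theorem sum_admissible_eq_sum_extend {k : ℕ} (f : Perm (Fin (k + 2)) → ℕ) :
    ∑ π : {π : Perm (Fin (k + 2)) // Admissible π}, f π =
      ∑ a : Fin (k + 1), ∑ σ : {σ : Perm (Fin k) // Admissible σ}, f (extend a σ) :=
  (Fintype.sum_equiv (extendEquiv k) _ _ fun _ => rfl).symm.trans (Fintype.sum_prod_type _)

theorem admissibleCount_add_two (k : ℕ) :
    admissibleCount (k + 2) = (k + 1) * admissibleCount k := by
  rw [admissibleCount, ← Fintype.card_congr (extendEquiv k), Fintype.card_prod, Fintype.card_fin,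
    admissibleCount]

/-- Here `m - 2` truncates to `0`, and `entry π 0 = 0` both for `m = 0` (out of range) and
`m = 1`. -/
theorem admissible_of_lt_two {m : ℕ} (hm : m < 2) (π : Perm (Fin m)) : Admissible π := by
  refine ⟨fun p _ i ⟨h, _⟩ => by omega, ?_⟩
  rw [show m - 2 = 0 by omega]
  rcases Nat.eq_zero_or_pos m with rfl | hpos
  · exact dif_neg (lt_irrefl 0)
  · have := entry_lt π hpos
    omega

theorem admissibleCount_of_lt_two {m : ℕ} (hm : m < 2) : admissibleCount m = 1 := by
  rw [admissibleCount, Fintype.card_congr (Equiv.subtypeUnivEquiv (admissible_of_lt_two hm)),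
    Fintype.card_perm, Fintype.card_fin]
  interval_cases m <;> rfl

theorem admissibleCount_succ : ∀ k, admissibleCount (k + 1) = k.doubleFactorial
  | 0 => admissibleCount_of_lt_two (by omega)
  | 1 => by rw [admissibleCount_add_two 0, admissibleCount_of_lt_two (by omega)]; rfl
  | k + 2 => by
    rw [admissibleCount_add_two (k + 1), admissibleCount_succ k, Nat.doubleFactorial_add_two]

theorem two_mul_sum_fin_add_two (k : ℕ) :
    2 * ∑ a : Fin (k + 1), ((a : ℕ) + 2) = (k + 1) * (k + 4) := by
  rw [Fin.sum_univ_eq_sum_range (· + 2), sum_add_distrib, sum_const, card_range, mul_add,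
    mul_comm 2, sum_range_id_mul_two]
  simp only [Nat.add_sub_cancel, smul_eq_mul]
  ring

theorem two_mul_lastValueSum_add_two (k : ℕ) :
    2 * lastValueSum (k + 2) = (k + 1) * (k + 4) * admissibleCount k := by
  rw [lastValueSum, show k + 2 - 1 = k + 1 from rfl,
    sum_admissible_eq_sum_extend (fun π => entry π (k + 1) + 1)]
  simp only [entry_extend_succ, add_assoc, Nat.reduceAdd, sum_const, card_univ, smul_eq_mul]
  rw [← mul_sum, ← admissibleCount, mul_left_comm, two_mul_sum_fin_add_two]
  ring

theorem sum_ite_val_le_eq_succ {k e : ℕ} (he : e < k + 1) :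
    ∑ a : Fin (k + 1), (if (a : ℕ) ≤ e then 1 else 0) = e + 1 := by
  rw [Fin.sum_univ_eq_sum_range (fun a => if a ≤ e then 1 else 0), sum_boole, Nat.cast_id,
    ← card_range (e + 1)]
  congr 1
  ext a
  simp only [mem_filter, mem_range]
  omega

theorem tl312_add_two {k : ℕ} (hk : 2 ≤ k) :
    tl312 (k + 2) (by omega) = (k + 1) * tl312 k hk + lastValueSum k := by
  rw [tl312_eq_sum, tl312_eq_sum, sum_admissible_eq_sum_extend]
  simp only [occCount_extend, sum_add_distrib, sum_const, card_univ, Fintype.card_fin,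
    smul_eq_mul]
  congr 1
  rw [sum_comm, lastValueSum]
  refine sum_congr rfl fun σ _ => ?_
  simp only [show 1 ≤ k by omega, true_and]
  exact sum_ite_val_le_eq_succ (by have := entry_lt σ.1 (i := k - 1) (by omega); omega)

end Av

theorem stmt5 (n : ℕ) (hn : 5 ≤ n) :
    (tl312 n (by omega) : ℚ) =
      ((n : ℚ) - 1) * (tl312 (n - 2) (by omega) + (Nat.doubleFactorial (n - 3) : ℚ))
        - (Nat.doubleFactorial (n - 5) : ℚ) * (((n : ℚ) - 3) * ((n : ℚ) - 2)) / 2 := by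
  obtain ⟨j, rfl⟩ : ∃ j, n = j + 5 := ⟨n - 5, by omega⟩
  have hrec := Av.tl312_add_two (k := j + 3) (by omega)
  have hlast := Av.two_mul_lastValueSum_add_two (j + 1)
  rw [Av.admissibleCount_succ] at hlast
  have hdf := Nat.doubleFactorial_add_two j
  simp only [show j + 5 - 2 = j + 3 from rfl, show j + 5 - 3 = j + 2 from rfl,
    show j + 5 - 5 = j from rfl]
  qify at hrec hlast hdf
  push_cast
  linear_combination hrec + (1 / 2 : ℚ) * hlast - (j + 4 : ℚ) * hdf
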